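/- arXiv:2311.00249 — 2 statements merged into one kernel-verified Lean document; each statement's English description precedes it below -/
import Mathlib

section
/- With the setup of the iterated MW algorithm (β^0 = β, β^{i+1} = β^i \ M(β^i)), let K^i ⊆ J be the index set of segments of β^i that are shortened at step i, with indices tracked through the identifications J ⊇ J^1 ⊇ J^2 ⊇ .... Let t be the number of segments of β whose end value equals the maximal end value e. Then the index sets K^0, K^1, ..., K^{t−1} are mutually disjoint; equivalently, no segment of β is shortened twice during the first t iterations of the MW algorithm. -/
namespace MS

variable {R : Type*} [CommRing R] [LinearOrder R] [IsStrictOrderedRing R] [FloorRing R]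

/-- Number of elements of the segment `[Δ.1, Δ.2]` (integer steps of size 1). -/
def segLen (Δ : R × R) : ℕ := (⌊Δ.2 - Δ.1⌋).toNat + 1

/-- `Δ` is a genuine segment: its end is its base plus a natural number. -/
def IsSeg (Δ : R × R) : Prop := ∃ n : ℕ, Δ.2 = Δ.1 + (n : R)

/-- Membership of `x` in the segment `Δ = [b,e] = {b, b+1, ..., e}`. -/
def segMem (x : R) (Δ : R × R) : Prop := ∃ j : ℕ, j < segLen Δ ∧ x = Δ.1 + (j : R)

/-- The support of a segment: the multiset `{b, b+1, ..., e}`. -/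
def segSupp (Δ : R × R) : Multiset R :=
  (Multiset.range (segLen Δ)).map (fun (j : ℕ) => Δ.1 + (j : R))

/-- The support of a multi-segment: multiset sum of the supports of its segments. -/
def msSupp (α : Multiset (R × R)) : Multiset R := (α.map segSupp).sum

/-- Containment of segments, as sets. -/
def SubSeg (Δ1 Δ2 : R × R) : Prop := ∀ x : R, segMem x Δ1 → segMem x Δ2

/-- Segments are linked: their union is a segment and neither contains the other. -/
def Linked (Δ1 Δ2 : R × R) : Prop :=
  (∃ Δ : R × R, IsSeg Δ ∧ ∀ x : R, segMem x Δ ↔ (segMem x Δ1 ∨ segMem x Δ2)) ∧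
    ¬ SubSeg Δ1 Δ2 ∧ ¬ SubSeg Δ2 Δ1

/-- `β` is obtained from `α` by one elementary operation: replace a linked pair
`{Δ1, Δ2}` by `{Δ1 ∪ Δ2, Δ1 ∩ Δ2}`, dropping the intersection if empty. -/
def ElemOp (α β : Multiset (R × R)) : Prop :=
  ∃ Δ1 Δ2 γ, α = Δ1 ::ₘ Δ2 ::ₘ γ ∧ Linked Δ1 Δ2 ∧
    β = (if max Δ1.1 Δ2.1 ≤ min Δ1.2 Δ2.2 then
          (min Δ1.1 Δ2.1, max Δ1.2 Δ2.2) ::ₘ (max Δ1.1 Δ2.1, min Δ1.2 Δ2.2) ::ₘ γ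
        else (min Δ1.1 Δ2.1, max Δ1.2 Δ2.2) ::ₘ γ)

/-- The Zelevinsky ordering: `MsGE β α` means `β ≥ α`, i.e. `α` is obtained from `β`
by a finite (possibly empty) sequence of elementary operations. -/
def MsGE (β α : Multiset (R × R)) : Prop := Relation.ReflTransGen ElemOp β α

/-- `c = [Δ_e, Δ_{e-1}, ..., Δ_m]` is a chain selected by the greedy rule of the
Mœglin–Waldspurger algorithm applied to the multi-segment `β`. -/
def IsMWChain (β : Multiset (R × R)) (c : List (R × R)) : Prop :=
  c ≠ [] ∧ (↑c : Multiset (R × R)) ≤ β ∧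
  (∀ Δ ∈ β, Δ.2 ≤ (c.headD (0, 0)).2) ∧
  (∀ Δ ∈ β, Δ.2 = (c.headD (0, 0)).2 → Δ.1 ≤ (c.headD (0, 0)).1) ∧
  c.Chain' (fun Δ Δ' => Δ'.2 = Δ.2 - 1 ∧ Δ'.1 < Δ.1 ∧
      ∀ Γ ∈ β, Γ.2 = Δ.2 - 1 → Γ.1 < Δ.1 → Γ.1 ≤ Δ'.1) ∧
  (∀ Γ ∈ β, Γ.2 = (c.getLastD (0, 0)).2 - 1 → ¬ Γ.1 < (c.getLastD (0, 0)).1)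

/-- One step of the Mœglin–Waldspurger algorithm: from `β`, produce the segment
`Δ = M(β) = [m, e]` and the remainder `β' = β \ M(β)` (each selected segment is
shortened by one at its end, empty segments being removed). -/
def MWStep (β : Multiset (R × R)) (Δ : R × R) (β' : Multiset (R × R)) : Prop :=
  ∃ c : List (R × R), IsMWChain β c ∧
    Δ = ((c.getLastD (0, 0)).2, (c.headD (0, 0)).2) ∧
    β' = (β - ↑c) + ↑((c.filter (fun Γ => Γ.1 ≠ Γ.2)).map (fun Γ => (Γ.1, Γ.2 - 1)))

/-- The Mœglin–Waldspurger involution, as a relation: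
`α~ = ∅` if `α = ∅`, and `α~ = {M(α)} + (α \ M(α))~` otherwise. -/
inductive MWDual : Multiset (R × R) → Multiset (R × R) → Prop
  | empty : MWDual 0 0
  | step {β β' γ : Multiset (R × R)} {Δ : R × R} :
      MWStep β Δ β' → MWDual β' γ → MWDual β (Δ ::ₘ γ)

/-- The staircase multi-segment `{[x - j, x + len - j] : 0 ≤ j ≤ cnt}`.
`stair b ℓ s` is `δ_{b,e,s}` with `e = b + ℓ`; for naturals `d, a`,
`stair ((a-d)/2) d a` is the Arthur staircase `δ_{d,a}`. -/
def stair (x : R) (len cnt : ℕ) : Multiset (R × R) :=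
  (Multiset.range (cnt + 1)).map (fun (j : ℕ) => (x - (j : R), x + (len : R) - (j : R)))

end MS

/-! Every chain selected during the first `t` steps starts at the top end `e`: an untouched
segment of end `e` is left, and no step lengthens a segment. A greedy MW chain dominates, position
by position, every descending chain through its multi-segment with the same top end. So a later
chain cannot pick a segment shortened by an earlier one: at position `k + 1` that segment has the
base of the earlier chain's `k`-th segment, which is at least the base of the later chain's own
`k`-th segment, while the bases along a chain strictly decrease. -/

namespace MS

variable {R : Type*} [CommRing R] [LinearOrder R]

def DescendsTo (Δ Δ' : R × R) : Prop := Δ'.2 = Δ.2 - 1 ∧ Δ'.1 < Δ.1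

theorem snd_getElem_of_isChain_descendsTo {l : List (R × R)} (hl : l.IsChain DescendsTo) :
    ∀ k (hk : k < l.length), l[k].2 = (l.headD (0, 0)).2 - k
  | 0, hk => by
    cases l with
    | nil => simp at hk
    | cons => simp
  | k + 1, hk => by
    rw [((List.isChain_iff_getElem.mp hl) k hk).1,
      snd_getElem_of_isChain_descendsTo hl k (by omega)]
    push_cast
    ring

namespace IsMWChain

variable {β : Multiset (R × R)} {l : List (R × R)}

theorem length_pos (hl : IsMWChain β l) : 0 < l.length :=
  List.length_pos_iff.mpr hl.1

theorem headD_eq (hl : IsMWChain β l) : l.headD (0, 0) = l[0]'hl.length_pos := by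
  obtain ⟨a, t, rfl⟩ := List.ne_nil_iff_exists_cons.mp hl.1
  rfl

theorem getLastD_eq (hl : IsMWChain β l) :
    l.getLastD (0, 0) = l[l.length - 1]'(Nat.sub_lt hl.length_pos one_pos) := by
  rw [List.getLastD_eq_getLast?, List.getLast?_eq_getElem?, List.getElem?_eq_getElem]
  rfl

theorem getElem_mem (hl : IsMWChain β l) (k : ℕ) (hk : k < l.length) : l[k] ∈ β :=
  Multiset.mem_of_le hl.2.1 (Multiset.mem_coe.mpr (List.getElem_mem hk))

theorem isChain_descendsTo (hl : IsMWChain β l) : l.IsChain DescendsTo :=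
  hl.2.2.2.2.1.imp fun _ _ h => ⟨h.1, h.2.1⟩

theorem snd_getElem (hl : IsMWChain β l) (k : ℕ) (hk : k < l.length) :
    l[k].2 = (l.headD (0, 0)).2 - k :=
  snd_getElem_of_isChain_descendsTo hl.isChain_descendsTo k hk

theorem head_snd_eq (hl : IsMWChain β l) {Δ : R × R} (hΔ : Δ ∈ β) (hmax : ∀ Γ ∈ β, Γ.2 ≤ Δ.2) :
    (l.headD (0, 0)).2 = Δ.2 := by
  refine le_antisymm ?_ (hl.2.2.1 Δ hΔ)
  rw [hl.headD_eq]
  exact hmax _ (hl.getElem_mem 0 hl.length_pos)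

theorem exists_lt_length_and_fst_le (hl : IsMWChain β l) {l' : List (R × R)}
    (hl' : l'.IsChain DescendsTo) (hhead : (l'.headD (0, 0)).2 = (l.headD (0, 0)).2) :
    ∀ k (hk : k < l'.length), (∀ m (hm : m ≤ k), l'[m] ∈ β) →
      ∃ hk' : k < l.length, l'[k].1 ≤ l[k].1
  | 0, hk, hmem => by
    refine ⟨hl.length_pos, ?_⟩
    have h0 := hl.2.2.2.1 l'[0] (hmem 0 le_rfl)
    rw [← hhead, hl.headD_eq] at h0
    exact h0 (by simpa using snd_getElem_of_isChain_descendsTo hl' 0 hk)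
  | k + 1, hk, hmem => by
    obtain ⟨hk', hle⟩ := exists_lt_length_and_fst_le hl hl' hhead k (by omega)
      fun m hm => hmem m (by omega)
    have hsnd : l'[k + 1].2 = l[k].2 - 1 := by
      rw [((List.isChain_iff_getElem.mp hl') k hk).1, snd_getElem_of_isChain_descendsTo hl',
        hl.snd_getElem, hhead]
    have hfst : l'[k + 1].1 < l[k].1 := ((List.isChain_iff_getElem.mp hl') k hk).2.trans_le hle
    have hk'' : k + 1 < l.length := by
      by_contra hlast
      have hlast : l.length - 1 = k := by omega
      have hstop := hl.2.2.2.2.2 l'[k + 1] (hmem (k + 1) le_rfl)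
      simp only [hl.getLastD_eq, hlast] at hstop
      exact hstop hsnd hfst
    exact ⟨hk'', (List.isChain_iff_getElem.mp hl.2.2.2.2.1 k hk'').2.2 _
      (hmem (k + 1) le_rfl) hsnd hfst⟩

end IsMWChain

def shortenAll (l : List (R × R)) : Multiset (R × R) :=
  ↑((l.filter (fun Γ => Γ.1 ≠ Γ.2)).map (fun Γ => (Γ.1, Γ.2 - 1)))

theorem exists_of_mem_shortenAll {l : List (R × R)} {Δ : R × R} (hΔ : Δ ∈ shortenAll l) :
    ∃ Γ ∈ l, Δ = (Γ.1, Γ.2 - 1) := by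
  obtain ⟨Γ, hΓ, rfl⟩ := List.mem_map.mp (Multiset.mem_coe.mp hΔ)
  exact ⟨Γ, List.mem_of_mem_filter hΓ, rfl⟩

/-- `Δ` was produced by an earlier MW step: it is the shortening of a segment of an MW chain
with top end `e`, selected in a multi-segment that contained all the untouched segments `A`. -/
def ShortenedFromChain (A : Multiset (R × R)) (e : R) (Δ : R × R) : Prop :=
  ∃ B l, A ≤ B ∧ IsMWChain B l ∧ (l.headD (0, 0)).2 = e ∧ ∃ Γ ∈ l, Δ = (Γ.1, Γ.2 - 1)

theorem ShortenedFromChain.mono {A A' : Multiset (R × R)} {e : R} {Δ : R × R}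
    (h : ShortenedFromChain A e Δ) (hA : A' ≤ A) : ShortenedFromChain A' e Δ :=
  let ⟨B, l, hAB, hrest⟩ := h
  ⟨B, l, hA.trans hAB, hrest⟩

/-- After `i` steps of the MW iteration on `β`, with `S` the sum of the chains selected so far and
`B` the current multi-segment: `β - S` is what is left untouched, `i` segments of end `e` have been
used, and everything else in `B` was shortened by an earlier step. -/
def MWIterState (β : Multiset (R × R)) (e : R) (i : ℕ) (S B : Multiset (R × R)) : Prop :=
  S ≤ β ∧ ((β - S).filter (fun Δ => Δ.2 = e)).card + i = (β.filter (fun Δ => Δ.2 = e)).card ∧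
    ∃ T, B = β - S + T ∧ ∀ Δ ∈ T, ShortenedFromChain (β - S) e Δ

theorem mwIterState_zero (β : Multiset (R × R)) (e : R) : MWIterState β e 0 0 β :=
  ⟨Multiset.zero_le β, by simp, 0, by simp, by simp⟩

variable [IsStrictOrderedRing R]

namespace IsMWChain

variable {β : Multiset (R × R)} {l : List (R × R)}

theorem snd_le_head {Γ : R × R} (hl : IsMWChain β l) (hΓ : Γ ∈ l) :
    Γ.2 ≤ (l.headD (0, 0)).2 := by
  obtain ⟨k, hk, rfl⟩ := List.getElem_of_mem hΓ
  rw [hl.snd_getElem k hk]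
  simp

theorem nodup (hl : IsMWChain β l) : l.Nodup := by
  refine List.nodup_iff_injective_getElem.mpr fun ⟨p, hp⟩ ⟨q, hq⟩ hpq => Fin.ext ?_
  have := congrArg Prod.snd hpq
  simpa only [hl.snd_getElem, sub_right_inj, Nat.cast_inj] using this

theorem card_filter_snd_eq_head (hl : IsMWChain β l) :
    (Multiset.filter (fun Δ : R × R => Δ.2 = (l.headD (0, 0)).2) l).card = 1 := by
  obtain ⟨a, t, rfl⟩ := List.ne_nil_iff_exists_cons.mp hl.1
  have ht : ∀ Γ ∈ (t : Multiset (R × R)), Γ.2 ≠ a.2 := by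
    intro Γ hΓ
    obtain ⟨k, hk, rfl⟩ := List.getElem_of_mem (Multiset.mem_coe.mp hΓ)
    have := hl.snd_getElem (k + 1) (by simp [hk])
    simp only [List.getElem_cons_succ, List.headD_cons] at this
    rw [this, Ne, sub_eq_self]
    exact_mod_cast (k + 1).succ_ne_zero
  rw [← Multiset.cons_coe, List.headD_cons,
    Multiset.filter_cons_of_pos (p := fun Δ : R × R => Δ.2 = a.2) _ rfl,
    Multiset.filter_eq_nil.mpr ht, Multiset.card_cons, Multiset.card_zero]

end IsMWChain

theorem ShortenedFromChain.snd_lt {A : Multiset (R × R)} {e : R} {Δ : R × R}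
    (h : ShortenedFromChain A e Δ) : Δ.2 < e := by
  obtain ⟨B, l, -, hl, rfl, Γ, hΓ, rfl⟩ := h
  exact sub_one_lt _ |>.trans_le (hl.snd_le_head hΓ)

namespace IsMWChain

variable {A T : Multiset (R × R)} {l : List (R × R)}

theorem coe_le (hl : IsMWChain (A + T) l)
    (hT : ∀ Δ ∈ T, ShortenedFromChain A (l.headD (0, 0)).2 Δ) : (l : Multiset (R × R)) ≤ A := by
  have hmem : ∀ k (hk : k < l.length), l[k] ∈ A := by
    intro k
    induction k using Nat.strong_induction_on with
    | _ k ih =>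
      intro hk
      refine (Multiset.mem_add.mp (hl.getElem_mem k hk)).resolve_right fun hkT => ?_
      obtain ⟨B, l', hAB, hl', hhead, Γ, hΓ, hkΓ⟩ := hT _ hkT
      obtain ⟨m, hm, rfl⟩ := List.getElem_of_mem hΓ
      have hkm : k = m + 1 := by
        have := congrArg Prod.snd hkΓ
        simp only [hl.snd_getElem, hl'.snd_getElem, hhead] at this
        exact_mod_cast (by linear_combination -this : (k : R) = m + 1)
      subst hkm
      obtain ⟨_, hle⟩ := hl'.exists_lt_length_and_fst_le hl.isChain_descendsTo hhead.symm m
        (by omega) fun j hj => Multiset.mem_of_le hAB (ih j (by omega) _)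
      have hdesc := (List.isChain_iff_getElem.mp hl.isChain_descendsTo m hk).2
      rw [hkΓ] at hdesc
      exact hdesc.not_ge hle
  exact (Multiset.le_iff_subset (Multiset.coe_nodup.mpr hl.nodup)).mpr fun Δ hΔ => by
    obtain ⟨k, hk, rfl⟩ := List.getElem_of_mem (Multiset.mem_coe.mp hΔ)
    exact hmem k hk

theorem head_snd_eq_of_shortenedFromChain {e : R} (hl : IsMWChain (A + T) l) {Δ : R × R}
    (hΔ : Δ ∈ A) (hΔe : Δ.2 = e) (hmax : ∀ Γ ∈ A, Γ.2 ≤ e)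
    (hT : ∀ Γ ∈ T, ShortenedFromChain A e Γ) : (l.headD (0, 0)).2 = e :=
  hΔe ▸ hl.head_snd_eq (Multiset.mem_add.mpr (Or.inl hΔ)) fun Γ hΓ => hΔe ▸
    (Multiset.mem_add.mp hΓ).elim (hmax Γ) fun hΓT => (hT Γ hΓT).snd_lt.le

end IsMWChain

theorem MWIterState.step {β S B : Multiset (R × R)} {e : R} {i : ℕ} {l : List (R × R)}
    (h : MWIterState β e i S B) (hβe : ∀ Δ ∈ β, Δ.2 ≤ e)
    (hi : i < (β.filter (fun Δ => Δ.2 = e)).card) (hl : IsMWChain B l) :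
    MWIterState β e (i + 1) (S + l) (B - l + shortenAll l) := by
  obtain ⟨hS, hcount, T, rfl, hT⟩ := h
  obtain ⟨Δ, hΔ, hΔe⟩ : ∃ Δ ∈ β - S, Δ.2 = e := by
    obtain ⟨Δ, hΔ⟩ := Multiset.card_pos_iff_exists_mem.mp (by omega :
      0 < ((β - S).filter (fun Δ => Δ.2 = e)).card)
    exact ⟨Δ, Multiset.mem_of_mem_filter hΔ, (Multiset.mem_filter.mp hΔ).2⟩
  have hhead := hl.head_snd_eq_of_shortenedFromChain hΔ hΔe
    (fun Γ hΓ => hβe Γ (Multiset.mem_of_le tsub_le_self hΓ)) hT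
  have hlA := hl.coe_le (hhead ▸ hT)
  have hsub : β - (S + l) = β - S - l := tsub_add_eq_tsub_tsub β S l
  refine ⟨(le_tsub_iff_left hS).mp hlA, ?_, T + shortenAll l, ?_, ?_⟩
  · have hone := hl.card_filter_snd_eq_head
    rw [hhead] at hone
    have hfilter := Multiset.card_le_card (Multiset.filter_le_filter (fun Γ => Γ.2 = e) hlA)
    rw [hsub, Multiset.filter_sub, Multiset.card_sub (Multiset.filter_le_filter _ hlA)]
    omega
  · rw [hsub, ← tsub_add_eq_add_tsub hlA, add_assoc]
  · intro Γ hΓ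
    rw [hsub]
    rcases Multiset.mem_add.mp hΓ with hΓT | hΓl
    · exact (hT Γ hΓT).mono tsub_le_self
    · exact ⟨_, l, tsub_le_self.trans le_self_add, hl, hhead, exists_of_mem_shortenAll hΓl⟩

end MS

theorem mw_chains_disjoint_general (β : Multiset (ℤ × ℤ))
    (e : ℤ) (he : (∃ Δ ∈ β, Δ.2 = e) ∧ ∀ Δ ∈ β, Δ.2 ≤ e)
    (t : ℕ) (ht : t = (β.filter (fun Δ => Δ.2 = e)).card)
    (B : ℕ → Multiset (ℤ × ℤ)) (M : ℕ → ℤ × ℤ) (hB0 : B 0 = β)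
    (c : ℕ → List (ℤ × ℤ))
    (hc : ∀ i < t, MS.IsMWChain (B i) (c i) ∧
      (M i) = (((c i).getLastD (0, 0)).2, ((c i).headD (0, 0)).2) ∧
      B (i + 1) = (B i - ↑(c i)) +
        ↑(((c i).filter (fun Γ => Γ.1 ≠ Γ.2)).map (fun Γ => (Γ.1, Γ.2 - 1)))) :
    (∑ i ∈ Finset.range t, ((c i : Multiset (ℤ × ℤ)))) ≤ β := by
  have hstate : ∀ i ≤ t,
      MS.MWIterState β e i (∑ j ∈ Finset.range i, (c j : Multiset (ℤ × ℤ))) (B i) := by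
    intro i hi
    induction i with
    | zero => simpa [hB0] using MS.mwIterState_zero β e
    | succ i ih =>
      rw [Finset.sum_range_succ, (hc i hi).2.2]
      exact (ih (by omega)).step he.2 (by omega) (hc i hi).1
  exact (hstate t le_rfl).1

/-- the segments selected during the first `t` iterations of the MW
algorithm are mutually disjoint unmodified segments of `β`: no segment is shortened
twice, i.e. the multiset sum of the selected chains is a sub-multiset of `β`. -/
theorem mw_chains_disjoint (β : Multiset (ℤ × ℤ)) (hval : ∀ Δ ∈ β, Δ.1 ≤ Δ.2) (hne : β ≠ 0)
    (e : ℤ) (he : (∃ Δ ∈ β, Δ.2 = e) ∧ ∀ Δ ∈ β, Δ.2 ≤ e)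
    (t : ℕ) (ht : t = (β.filter (fun Δ => Δ.2 = e)).card)
    (B : ℕ → Multiset (ℤ × ℤ)) (M : ℕ → ℤ × ℤ) (hB0 : B 0 = β)
    (hstep : ∀ i < t, MS.MWStep (B i) (M i) (B (i + 1)))
    (c : ℕ → List (ℤ × ℤ))
    (hc : ∀ i < t, MS.IsMWChain (B i) (c i) ∧
      (M i) = (((c i).getLastD (0, 0)).2, ((c i).headD (0, 0)).2) ∧
      B (i + 1) = (B i - ↑(c i)) +
        ↑(((c i).filter (fun Γ => Γ.1 ≠ Γ.2)).map (fun Γ => (Γ.1, Γ.2 - 1)))) :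
    (∑ i ∈ Finset.range t, ((c i : Multiset (ℤ × ℤ)))) ≤ β :=
  mw_chains_disjoint_general β e he t ht B M hB0 c hc
end

section
/- With the iterated MW algorithm notation, for any 0 ≤ i ≤ t−1 and any m^i ≤ l ≤ e, the segments selected at end value l in the successive iterations form an increasing chain: Δ^0_{k^0_l} ⊆ Δ^1_{k^1_l} ⊆ ... ⊆ Δ^i_{k^i_l}, where Δ^r_{k^r_l} is the segment of end value l selected by the MW greedy rule at iteration r (well-defined since m^0 ≤ ... ≤ m^{t−1} ≤ l). -/
/-! The chain selected by an MW step contains exactly one segment of the maximal end `e`, and the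
step lowers its end by one; so each of the first `t` chains starts at end `e`. A segment of the
next chain is either an untouched segment of the previous multisegment or a shortened segment of
the previous chain. Walking down the next chain, one shows inductively that each of its segments
lies in the previously selected segment with the same end: an untouched segment was a candidate
for the previous greedy choice, which therefore dominates it, while a shortened `[b, l]` would come
from `[b, l + 1]`, the only previously selected segment of end `l + 1`, which by induction covers
the predecessor of `[b, l]` in the new chain, against the strict decrease of bases along a chain. -/

namespace List

variable {α : Type*} {r : α → α → Prop}

theorem IsChain.getLast?_eq_or_exists_rel {l : List α} (h : l.IsChain r) {a : α} (ha : a ∈ l) :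
    l.getLast? = some a ∨ ∃ b ∈ l, r a b := by
  refine (h.imp_of_mem_imp (S := fun x y => r x y ∧ y ∈ l) fun _ _ _ hy hxy => ⟨hxy, hy⟩)
    |>.backwards_induction (fun x => l.getLast? = some x ∨ ∃ b ∈ l, r x b) l ?_ ?_ a ha
  · exact fun x y hxy _ => Or.inr ⟨y, hxy.2, hxy.1⟩
  · exact fun hl => Or.inl (getLast?_eq_some_getLast hl)

end List

namespace MS

variable {R : Type*}

section CoveredBy

variable [Preorder R]

def CoveredBy (c c' : List (R × R)) : Prop :=
  ∀ Δ ∈ c, ∃ Δ' ∈ c', Δ'.2 = Δ.2 ∧ Δ.1 ≤ Δ'.1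

theorem CoveredBy.refl (c : List (R × R)) : CoveredBy c c :=
  fun Δ hΔ => ⟨Δ, hΔ, rfl, le_rfl⟩

theorem CoveredBy.trans {c c' c'' : List (R × R)} (h : CoveredBy c c') (h' : CoveredBy c' c'') :
    CoveredBy c c'' := by
  intro Δ hΔ
  obtain ⟨Δ', hΔ', hend, hbase⟩ := h Δ hΔ
  obtain ⟨Δ'', hΔ'', hend', hbase'⟩ := h' Δ' hΔ'
  exact ⟨Δ'', hΔ'', hend'.trans hend, hbase.trans hbase'⟩

end CoveredBy

section MWRest

variable [CommRing R] [DecidableEq R] {β : Multiset (R × R)} {c : List (R × R)}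

/-- The multisegment `β \ M(β)` left after the MW step that selects the chain `c`. -/
def mwRest (β : Multiset (R × R)) (c : List (R × R)) : Multiset (R × R) :=
  (β - ↑c) + ↑((c.filter (fun Γ => Γ.1 ≠ Γ.2)).map (fun Γ => (Γ.1, Γ.2 - 1)))

theorem mem_or_exists_of_mem_mwRest {Δ : R × R} (hΔ : Δ ∈ mwRest β c) :
    Δ ∈ β ∨ ∃ Γ ∈ c, Δ = (Γ.1, Γ.2 - 1) := by
  rcases Multiset.mem_add.1 hΔ with hsub | hshort
  · exact Or.inl (Multiset.mem_of_le (Multiset.sub_le_self _ _) hsub)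
  · obtain ⟨Γ, hΓ, rfl⟩ := List.mem_map.1 (Multiset.mem_coe.1 hshort)
    exact Or.inr ⟨Γ, (List.mem_filter.1 hΓ).1, rfl⟩

theorem snd_le_of_mem_mwRest [LinearOrder R] [IsStrictOrderedRing R] {e : R}
    (hc : (↑c : Multiset (R × R)) ≤ β) (hβ : ∀ Δ ∈ β, Δ.2 ≤ e) {Δ : R × R}
    (hΔ : Δ ∈ mwRest β c) : Δ.2 ≤ e := by
  rcases mem_or_exists_of_mem_mwRest hΔ with hmem | ⟨Γ, hΓ, rfl⟩
  · exact hβ Δ hmem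
  · exact (sub_one_lt Γ.2).le.trans (hβ Γ (Multiset.mem_of_le hc hΓ))

end MWRest

namespace IsMWChain

variable [CommRing R] [LinearOrder R] {β : Multiset (R × R)} {c : List (R × R)}

theorem ne_nil (h : IsMWChain β c) : c ≠ [] := h.1

theorem coe_le_s10 (h : IsMWChain β c) : (↑c : Multiset (R × R)) ≤ β := h.2.1

theorem mem_of_mem (h : IsMWChain β c) {Δ : R × R} (hΔ : Δ ∈ c) : Δ ∈ β :=
  Multiset.mem_of_le h.coe_le_s10 hΔ

theorem headD_mem (h : IsMWChain β c) : c.headD (0, 0) ∈ c := by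
  obtain ⟨a, l, rfl⟩ := List.exists_cons_of_ne_nil h.ne_nil
  exact List.mem_cons_self

theorem snd_le_headD (h : IsMWChain β c) {Δ : R × R} (hΔ : Δ ∈ β) :
    Δ.2 ≤ (c.headD (0, 0)).2 := h.2.2.1 Δ hΔ

theorem fst_le_headD (h : IsMWChain β c) {Δ : R × R} (hΔ : Δ ∈ β)
    (hend : Δ.2 = (c.headD (0, 0)).2) : Δ.1 ≤ (c.headD (0, 0)).1 := h.2.2.2.1 Δ hΔ hend

theorem headD_snd_eq_of_card_filter_pos [DecidableEq R] {e : R} (h : IsMWChain β c)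
    (hβ : ∀ Δ ∈ β, Δ.2 ≤ e) (hpos : 0 < (β.filter (fun Δ => Δ.2 = e)).card) :
    (c.headD (0, 0)).2 = e := by
  obtain ⟨Δ, hΔ⟩ := Multiset.card_pos_iff_exists_mem.1 hpos
  obtain ⟨hΔβ, rfl⟩ := Multiset.mem_filter.1 hΔ
  exact le_antisymm (hβ _ (h.mem_of_mem h.headD_mem)) (h.snd_le_headD hΔβ)

/-- `Γ` is a candidate for the greedy step after `Δ`, so `Δ` is not the last segment of `c` and
its successor dominates `Γ`. -/
theorem exists_covering (h : IsMWChain β c) {Δ Γ : R × R} (hΔ : Δ ∈ c) (hΓ : Γ ∈ β)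
    (hend : Γ.2 = Δ.2 - 1) (hbase : Γ.1 < Δ.1) : ∃ Δ' ∈ c, Δ'.2 = Γ.2 ∧ Γ.1 ≤ Δ'.1 := by
  rcases h.2.2.2.2.1.getLast?_eq_or_exists_rel hΔ with hlast | ⟨Δ', hΔ', hnext, -, hgreedy⟩
  · have hlastD : c.getLastD (0, 0) = Δ := by simp [List.getLastD_eq_getLast?, hlast]
    exact absurd (hlastD ▸ hbase) (h.2.2.2.2.2 Γ hΓ (hlastD ▸ hend))
  · exact ⟨Δ', hΔ', hnext.trans hend.symm, hgreedy Γ hΓ hend hbase⟩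

variable [IsStrictOrderedRing R]

theorem pairwise_snd_gt (h : IsMWChain β c) : c.Pairwise (fun a b => b.2 < a.2) := by
  have hmap : (c.map Prod.snd).IsChain (· > ·) :=
    (List.isChain_map _).2 (h.2.2.2.2.1.imp fun a b hab => by simp [hab.1])
  exact List.pairwise_map.1 (List.isChain_iff_pairwise.1 hmap)

theorem eq_of_snd_eq (h : IsMWChain β c) {a b : R × R} (ha : a ∈ c) (hb : b ∈ c)
    (hab : a.2 = b.2) : a = b :=
  List.inj_on_of_nodup_map (List.pairwise_map.2 (h.pairwise_snd_gt.imp ne_of_gt)) ha hb hab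

variable [DecidableEq R]

theorem card_filter_snd_eq_headD (h : IsMWChain β c) :
    ((↑c : Multiset (R × R)).filter (fun Δ => Δ.2 = (c.headD (0, 0)).2)).card = 1 := by
  obtain ⟨a, l, rfl⟩ := List.exists_cons_of_ne_nil h.ne_nil
  have hl : l.filter (fun Δ => Δ.2 = a.2) = [] :=
    List.filter_eq_nil_iff.2 fun b hb => by
      simpa using ((List.pairwise_cons.1 h.pairwise_snd_gt).1 b hb).ne
  simp [Multiset.filter_coe, hl]

theorem card_filter_mwRest_add_one {e : R} (h : IsMWChain β c) (hhead : (c.headD (0, 0)).2 = e) :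
    ((mwRest β c).filter (fun Δ => Δ.2 = e)).card + 1 = (β.filter (fun Δ => Δ.2 = e)).card := by
  have hshort : (↑((c.filter (fun Γ => Γ.1 ≠ Γ.2)).map (fun Γ => (Γ.1, Γ.2 - 1))) :
      Multiset (R × R)).filter (fun Δ => Δ.2 = e) = 0 := by
    refine Multiset.filter_eq_nil.2 fun Δ hΔ hΔe => ?_
    obtain ⟨Γ, hΓ, rfl⟩ := List.mem_map.1 (Multiset.mem_coe.1 hΔ)
    have hle : Γ.2 ≤ e := hhead ▸ h.snd_le_headD (h.mem_of_mem (List.mem_filter.1 hΓ).1)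
    exact (sub_one_lt Γ.2).not_ge (hle.trans_eq hΔe.symm)
  have hle := Multiset.filter_le_filter (fun Δ => Δ.2 = e) h.coe_le_s10
  have hone := h.card_filter_snd_eq_headD
  rw [hhead] at hone
  have hpos := Multiset.card_le_card hle
  rw [mwRest, Multiset.filter_add, hshort, add_zero, Multiset.filter_sub,
    Multiset.card_sub hle, hone]
  omega

theorem coveredBy_of_mwRest {c' : List (R × R)} (h : IsMWChain β c)
    (h' : IsMWChain (mwRest β c) c') (hhead : (c'.headD (0, 0)).2 = (c.headD (0, 0)).2) :
    CoveredBy c' c := by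
  refine (h'.2.2.2.2.1.imp_of_mem_imp (S := fun x y => _ ∧ y ∈ c')
    fun _ _ _ hy hxy => ⟨hxy, hy⟩).induction _ c' ?_ ?_
  · rintro x y ⟨⟨hend, hlt, -⟩, hy⟩ ⟨Δ, hΔ, hΔend, hΔbase⟩
    rcases mem_or_exists_of_mem_mwRest (h'.mem_of_mem hy) with hyβ | ⟨Γ, hΓ, rfl⟩
    · exact h.exists_covering hΔ hyβ (by rw [hend, hΔend]) (hlt.trans_le hΔbase)
    · -- `Γ` and `Δ` have the same end, so they coincide, against `Γ.1 = y.1 < x.1 ≤ Δ.1`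
      have hΓΔ := h.eq_of_snd_eq hΓ hΔ (by simpa [hΔend] using hend)
      exact absurd (congrArg Prod.fst hΓΔ) (hlt.trans_le hΔbase).ne
  · intro hne
    obtain ⟨a, l, rfl⟩ := List.exists_cons_of_ne_nil hne
    change (a.2 = _) at hhead
    rcases mem_or_exists_of_mem_mwRest (h'.mem_of_mem h'.headD_mem) with haβ | ⟨Γ, hΓ, ha⟩
    · exact ⟨_, h.headD_mem, hhead.symm, h.fst_le_headD haβ hhead⟩
    · have hle := h.snd_le_headD (h.mem_of_mem hΓ)
      have haΓ : a.2 = Γ.2 - 1 := congrArg Prod.snd ha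
      exact ((sub_one_lt Γ.2).not_ge (hle.trans_eq (hhead.symm.trans haΓ))).elim

end IsMWChain

end MS

theorem mw_chains_mono_general (β : Multiset (ℤ × ℤ))
    (e : ℤ) (he : (∃ Δ ∈ β, Δ.2 = e) ∧ ∀ Δ ∈ β, Δ.2 ≤ e)
    (t : ℕ) (ht : t = (β.filter (fun Δ => Δ.2 = e)).card)
    (B : ℕ → Multiset (ℤ × ℤ)) (M : ℕ → ℤ × ℤ) (hB0 : B 0 = β)
    (c : ℕ → List (ℤ × ℤ))
    (hc : ∀ i < t, MS.IsMWChain (B i) (c i) ∧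
      (M i) = (((c i).getLastD (0, 0)).2, ((c i).headD (0, 0)).2) ∧
      B (i + 1) = (B i - ↑(c i)) +
        ↑(((c i).filter (fun Γ => Γ.1 ≠ Γ.2)).map (fun Γ => (Γ.1, Γ.2 - 1)))) :
    ∀ i < t, ∀ r ≤ i, ∀ Δ ∈ c i, ∃ Δ' ∈ c r, Δ'.2 = Δ.2 ∧ Δ.1 ≤ Δ'.1 := by
  have hrest : ∀ i < t, B (i + 1) = MS.mwRest (B i) (c i) := fun i hi => (hc i hi).2.2
  have hinv : ∀ i ≤ t, (∀ Δ ∈ B i, Δ.2 ≤ e) ∧ ((B i).filter (fun Δ => Δ.2 = e)).card = t - i := by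
    intro i hi
    induction i with
    | zero => exact ⟨hB0 ▸ he.2, by simp [hB0, ht]⟩
    | succ i ih =>
      obtain ⟨hbd, hcard⟩ := ih (by omega)
      have hch := (hc i (by omega)).1
      have hcount := hch.card_filter_mwRest_add_one (hch.headD_snd_eq_of_card_filter_pos hbd
        (by omega))
      rw [hrest i (by omega)]
      exact ⟨fun Δ => MS.snd_le_of_mem_mwRest hch.coe_le_s10 hbd, by omega⟩
  have hhead : ∀ i < t, ((c i).headD (0, 0)).2 = e := fun i hi =>
    (hc i hi).1.headD_snd_eq_of_card_filter_pos (hinv i hi.le).1 (by rw [(hinv i hi.le).2]; omega)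
  intro i hi r hr
  induction i, hr using Nat.le_induction with
  | base => exact MS.CoveredBy.refl _
  | succ i hri ih =>
    have hnext : MS.IsMWChain (MS.mwRest (B i) (c i)) (c (i + 1)) :=
      hrest i (by omega) ▸ (hc (i + 1) hi).1
    exact ((hc i (by omega)).1.coveredBy_of_mwRest hnext
      ((hhead _ hi).trans (hhead i (by omega)).symm)).trans (ih (by omega))

/-- the segments selected at a given end value `l` in successive MW
iterations form an increasing chain: for `r ≤ i < t`, the segment of end value `l`
selected at iteration `r` is contained in the one selected at iteration `i`. -/
theorem mw_chains_mono (β : Multiset (ℤ × ℤ)) (hval : ∀ Δ ∈ β, Δ.1 ≤ Δ.2) (hne : β ≠ 0)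
    (e : ℤ) (he : (∃ Δ ∈ β, Δ.2 = e) ∧ ∀ Δ ∈ β, Δ.2 ≤ e)
    (t : ℕ) (ht : t = (β.filter (fun Δ => Δ.2 = e)).card)
    (B : ℕ → Multiset (ℤ × ℤ)) (M : ℕ → ℤ × ℤ) (hB0 : B 0 = β)
    (hstep : ∀ i < t, MS.MWStep (B i) (M i) (B (i + 1)))
    (c : ℕ → List (ℤ × ℤ))
    (hc : ∀ i < t, MS.IsMWChain (B i) (c i) ∧
      (M i) = (((c i).getLastD (0, 0)).2, ((c i).headD (0, 0)).2) ∧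
      B (i + 1) = (B i - ↑(c i)) +
        ↑(((c i).filter (fun Γ => Γ.1 ≠ Γ.2)).map (fun Γ => (Γ.1, Γ.2 - 1)))) :
    ∀ i < t, ∀ r ≤ i, ∀ Δ ∈ c i, ∃ Δ' ∈ c r, Δ'.2 = Δ.2 ∧ Δ.1 ≤ Δ'.1 :=
  mw_chains_mono_general β e he t ht B M hB0 c hc
end
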